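/- arXiv:1301.0447 — 4 statements merged into one kernel-verified Lean document; each statement's English description precedes it below -/
import Mathlib

section
/- Given smooth real-valued functions γ, c on a domain in ℂ and a smooth section q with complex derivative data satisfying: (i) the conformal Gauss equation c_z̄ = 4(κ,κ)_z with κ real-normal-valued, (ii) the conformal Codazzi equation Im(D_z̄ D_z̄ κ + (1/2) c̄ κ) = 0, (iii) D_z q = 2 γ_z̄ κ − 2 γ D_z̄ κ; if γ̂ := 2 γ_zz + c γ + 2(q,κ) is real, then Im(2 γ̂_z̄z̄ + c̄ γ̂) = 0. -/
/-- Wirtinger derivative `∂_z f = ½(∂_u − i ∂_v) f`. -/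
noncomputable def wz {F : Type*} [NormedAddCommGroup F] [NormedSpace ℂ F]
    (f : ℂ → F) (x : ℂ) : F :=
  (2 : ℂ)⁻¹ • (fderiv ℝ f x 1 - Complex.I • fderiv ℝ f x Complex.I)

/-- Wirtinger derivative `∂_z̄ f = ½(∂_u + i ∂_v) f`. -/
noncomputable def wzb {F : Type*} [NormedAddCommGroup F] [NormedSpace ℂ F]
    (f : ℂ → F) (x : ℂ) : F :=
  (2 : ℂ)⁻¹ • (fderiv ℝ f x 1 + Complex.I • fderiv ℝ f x Complex.I)

/-- generic Wirtinger-type operator -/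
noncomputable def wgen {F : Type*} [NormedAddCommGroup F] [NormedSpace ℂ F]
    (μ : ℂ) (f : ℂ → F) (x : ℂ) : F :=
  (2 : ℂ)⁻¹ • (fderiv ℝ f x 1 + μ • fderiv ℝ f x Complex.I)

theorem wz_eq_wgen {F : Type*} [NormedAddCommGroup F] [NormedSpace ℂ F] (f : ℂ → F) :
    wz f = wgen (-Complex.I) f := by
  funext x
  simp [wz, wgen, sub_eq_add_neg, neg_smul]

theorem wzb_eq_wgen {F : Type*} [NormedAddCommGroup F] [NormedSpace ℂ F] (f : ℂ → F) :
    wzb f = wgen Complex.I f := rfl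

section
variable {F G : Type*} [NormedAddCommGroup F] [NormedSpace ℂ F]
  [NormedAddCommGroup G] [NormedSpace ℂ G]

theorem wgen_smooth {μ : ℂ} {f : ℂ → F} (hf : ContDiff ℝ (⊤ : ℕ∞) f) : ContDiff ℝ (⊤ : ℕ∞) (wgen μ f) := by
  have h1 : ContDiff ℝ (⊤ : ℕ∞) (fun x => fderiv ℝ f x 1) :=
    (hf.fderiv_right (by simp)).clm_apply contDiff_const
  have hI : ContDiff ℝ (⊤ : ℕ∞) (fun x => fderiv ℝ f x Complex.I) :=
    (hf.fderiv_right (by simp)).clm_apply contDiff_const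
  exact (h1.add (hI.const_smul μ)).const_smul ((2:ℂ)⁻¹)

theorem wgen_clm_comp {μ : ℂ} {f : ℂ → F} (e : F →L[ℂ] G) (hf : DifferentiableAt ℝ f x) :
    wgen μ (fun y => e (f y)) x = e (wgen μ f x) := by
  have : fderiv ℝ (fun y => e (f y)) x = (e.restrictScalars ℝ).comp (fderiv ℝ f x) :=
    ((e.restrictScalars ℝ).hasFDerivAt.comp x hf.hasFDerivAt).fderiv
  simp [wgen, this, map_add, map_smul]
end

section Scalar
variable {μ : ℂ} {f g : ℂ → ℂ} {x : ℂ}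

theorem wgen_add (hf : DifferentiableAt ℝ f x) (hg : DifferentiableAt ℝ g x) :
    wgen μ (fun y => f y + g y) x = wgen μ f x + wgen μ g x := by
  simp only [wgen, fderiv_fun_add hf hg, ContinuousLinearMap.add_apply, smul_eq_mul]
  ring

theorem wgen_sub (hf : DifferentiableAt ℝ f x) (hg : DifferentiableAt ℝ g x) :
    wgen μ (fun y => f y - g y) x = wgen μ f x - wgen μ g x := by
  simp only [wgen, fderiv_fun_sub hf hg, ContinuousLinearMap.sub_apply, smul_eq_mul]
  ring

theorem wgen_mul (hf : DifferentiableAt ℝ f x) (hg : DifferentiableAt ℝ g x) :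
    wgen μ (fun y => f y * g y) x = wgen μ f x * g x + f x * wgen μ g x := by
  simp only [wgen, fderiv_fun_mul hf hg, ContinuousLinearMap.add_apply,
    ContinuousLinearMap.smul_apply, smul_eq_mul]
  ring

theorem wgen_const_mul (k : ℂ) (hf : DifferentiableAt ℝ f x) :
    wgen μ (fun y => k * f y) x = k * wgen μ f x := by
  have := wgen_mul (μ := μ) (f := fun _ => k) (g := f) (differentiableAt_const k) hf
  simpa [wgen, fderiv_const] using this

theorem wgen_sum {ι : Type*} (s : Finset ι) (f : ι → ℂ → ℂ)
    (h : ∀ i ∈ s, DifferentiableAt ℝ (f i) x) :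
    wgen μ (fun y => ∑ i ∈ s, f i y) x = ∑ i ∈ s, wgen μ (f i) x := by
  simp only [wgen, fderiv_fun_sum h, ContinuousLinearMap.sum_apply]
  rw [Finset.smul_sum, ← Finset.sum_add_distrib, ← Finset.smul_sum]

theorem wgen_conj : wgen μ (fun y => (starRingEnd ℂ) (f y)) x
    = (starRingEnd ℂ) (wgen ((starRingEnd ℂ) μ) f x) := by
  by_cases hf : DifferentiableAt ℝ f x
  · have h1 : fderiv ℝ (fun y => (starRingEnd ℂ) (f y)) x
        = (Complex.conjCLE.toContinuousLinearMap).comp (fderiv ℝ f x) :=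
      ((Complex.conjCLE.toContinuousLinearMap).hasFDerivAt.comp x hf.hasFDerivAt).fderiv
    simp only [wgen, h1, ContinuousLinearMap.coe_comp', Function.comp_apply,
      ContinuousLinearEquiv.coe_coe, Complex.conjCLE_apply, map_add, map_mul, smul_eq_mul,
      map_inv₀, map_ofNat, Complex.conj_conj]
  · have hf' : ¬ DifferentiableAt ℝ (fun y => (starRingEnd ℂ) (f y)) x := by
      intro h
      apply hf
      have : f = fun y => (starRingEnd ℂ) ((starRingEnd ℂ) (f y)) := by
        funext y; simp
      rw [this]
      exact Complex.conjCLE.toContinuousLinearMap.differentiableAt.comp x h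
    simp [wgen, fderiv_zero_of_not_differentiableAt hf,
      fderiv_zero_of_not_differentiableAt hf']
end Scalar

section Comm
variable {F : Type*} [NormedAddCommGroup F] [NormedSpace ℂ F]

theorem fderiv_wgen {ν : ℂ} {f : ℂ → F} (hf : ContDiff ℝ (⊤ : ℕ∞) f) (x v : ℂ) :
    fderiv ℝ (wgen ν f) x v
      = (2:ℂ)⁻¹ • (fderiv ℝ (fderiv ℝ f) x v 1
          + ν • fderiv ℝ (fderiv ℝ f) x v Complex.I) := by
  have hd : Differentiable ℝ (fderiv ℝ f) := (hf.fderiv_right (m := (⊤ : ℕ∞)) (by simp)).differentiable (by simp)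
  have h1 : ∀ w : ℂ, DifferentiableAt ℝ (fun y => fderiv ℝ f y w) x := fun w =>
    ((ContinuousLinearMap.apply ℝ F w).differentiableAt).comp x (hd x)
  have e1 : ∀ w : ℂ, fderiv ℝ (fun y => fderiv ℝ f y w) x
      = (ContinuousLinearMap.apply ℝ F w).comp (fderiv ℝ (fderiv ℝ f) x) := fun w =>
    ((ContinuousLinearMap.apply ℝ F w).hasFDerivAt.comp x (hd x).hasFDerivAt).fderiv
  have : wgen ν f = fun y => (2:ℂ)⁻¹ • ((fun z => fderiv ℝ f z 1) y
      + ν • (fun z => fderiv ℝ f z Complex.I) y) := rfl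
  rw [this, fderiv_fun_const_smul ((h1 1).fun_add ((h1 Complex.I).fun_const_smul ν)),
    fderiv_fun_add (h1 1) ((h1 Complex.I).fun_const_smul ν), fderiv_fun_const_smul (h1 Complex.I),
    e1 1, e1 Complex.I]
  simp [ContinuousLinearMap.smul_apply, ContinuousLinearMap.add_apply]

theorem wgen_comm {μ ν : ℂ} {f : ℂ → ℂ} (hf : ContDiff ℝ (⊤ : ℕ∞) f) (x : ℂ) :
    wgen μ (wgen ν f) x = wgen ν (wgen μ f) x := by
  have hd : Differentiable ℝ (fderiv ℝ f) := (hf.fderiv_right (m := (⊤ : ℕ∞)) (by simp)).differentiable (by simp)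
  have hsymm := second_derivative_symmetric
    (f' := fderiv ℝ f) (f'' := fderiv ℝ (fderiv ℝ f) x)
    (fun y => ((hf.differentiable (by simp)) y).hasFDerivAt) (hd x).hasFDerivAt
  simp only [wgen, fderiv_wgen hf, smul_eq_mul]
  linear_combination (ν - μ)/4 * (hsymm 1 Complex.I)
end Comm

section Helpers
open Finset

theorem contdiff_top_diffAt {f : ℂ → ℂ} (hf : ContDiff ℝ (⊤ : ℕ∞) f) (x : ℂ) :
    DifferentiableAt ℝ f x := hf.differentiable (by simp) x

/-- derivative of ∑ kᵢ² -/
theorem sum_sq_deriv {m : ℕ} (k : Fin m → ℂ → ℂ) (sk : ∀ i, ContDiff ℝ (⊤ : ℕ∞) (k i))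
    (μ x : ℂ) :
    wgen μ (fun y => ∑ i, k i y * k i y) x = 2 * ∑ i, k i x * wgen μ (k i) x := by
  rw [wgen_sum _ _ (fun i _ => contdiff_top_diffAt ((sk i).mul (sk i)) x), Finset.mul_sum]
  refine Finset.sum_congr rfl fun i _ => ?_
  rw [wgen_mul (contdiff_top_diffAt (sk i) x) (contdiff_top_diffAt (sk i) x)]
  ring

/-- derivative of ∑ qᵢ kᵢ (generic products) -/
theorem sum_mul_deriv {m : ℕ} (u v : Fin m → ℂ → ℂ) (su : ∀ i, ContDiff ℝ (⊤ : ℕ∞) (u i))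
    (sv : ∀ i, ContDiff ℝ (⊤ : ℕ∞) (v i)) (μ x : ℂ) :
    wgen μ (fun y => ∑ i, u i y * v i y) x
      = ∑ i, (wgen μ (u i) x * v i x + u i x * wgen μ (v i) x) := by
  rw [wgen_sum _ _ (fun i _ => contdiff_top_diffAt ((su i).mul (sv i)) x)]
  exact Finset.sum_congr rfl fun i _ =>
    wgen_mul (contdiff_top_diffAt (su i) x) (contdiff_top_diffAt (sv i) x)

/-- expansion of the standard shape appearing as first derivative of (q,κ). -/
theorem wgen_expand3 (μ : ℂ) (f1 f2 f3 f4 f5 : ℂ → ℂ)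
    (s1 : ContDiff ℝ (⊤ : ℕ∞) f1) (s2 : ContDiff ℝ (⊤ : ℕ∞) f2) (s3 : ContDiff ℝ (⊤ : ℕ∞) f3)
    (s4 : ContDiff ℝ (⊤ : ℕ∞) f4) (s5 : ContDiff ℝ (⊤ : ℕ∞) f5) (x : ℂ) :
    wgen μ (fun y => 2 * (f1 y * f2 y) - f3 y * f4 y + f5 y) x
      = 2 * (wgen μ f1 x * f2 x + f1 x * wgen μ f2 x)
        - (wgen μ f3 x * f4 x + f3 x * wgen μ f4 x) + wgen μ f5 x := by
  have d1 := contdiff_top_diffAt s1 x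
  have d2 := contdiff_top_diffAt s2 x
  have d3 := contdiff_top_diffAt s3 x
  have d4 := contdiff_top_diffAt s4 x
  have d5 := contdiff_top_diffAt s5 x
  rw [wgen_add ((((contDiff_const.mul (s1.mul s2)).sub (s3.mul s4)).differentiable (by simp)) x) d5,
    wgen_sub (((contDiff_const.mul (s1.mul s2)).differentiable (by simp)) x)
      (((s3.mul s4).differentiable (by simp)) x),
    wgen_const_mul 2 (((s1.mul s2).differentiable (by simp)) x),
    wgen_mul d1 d2, wgen_mul d3 d4]

/-- expansion of the shape 2·f1 + f2·f3 + 2·f4 (the γ̂ shape). -/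
theorem wgen_expand_hat (μ : ℂ) (f1 f2 f3 f4 : ℂ → ℂ)
    (s1 : ContDiff ℝ (⊤ : ℕ∞) f1) (s2 : ContDiff ℝ (⊤ : ℕ∞) f2) (s3 : ContDiff ℝ (⊤ : ℕ∞) f3)
    (s4 : ContDiff ℝ (⊤ : ℕ∞) f4) (x : ℂ) :
    wgen μ (fun y => 2 * f1 y + f2 y * f3 y + 2 * f4 y) x
      = 2 * wgen μ f1 x + (wgen μ f2 x * f3 x + f2 x * wgen μ f3 x) + 2 * wgen μ f4 x := by
  have d1 := contdiff_top_diffAt s1 x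
  have d4 := contdiff_top_diffAt s4 x
  rw [wgen_add ((((contDiff_const.mul s1).add (s2.mul s3)).differentiable (by simp)) x)
      (((contDiff_const.mul s4).differentiable (by simp)) x),
    wgen_add (((contDiff_const.mul s1).differentiable (by simp)) x)
      (((s2.mul s3).differentiable (by simp)) x),
    wgen_const_mul 2 d1, wgen_const_mul 2 d4,
    wgen_mul (contdiff_top_diffAt s2 x) (contdiff_top_diffAt s3 x)]
end Helpers

section ConjHelpers

/-- conj of derivative of a real-valued function -/
theorem conj_wgen_real {f : ℂ → ℂ} (hf : (fun x => (starRingEnd ℂ) (f x)) = f) (ν x : ℂ) :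
    (starRingEnd ℂ) (wgen ν f x) = wgen ((starRingEnd ℂ) ν) f x := by
  have h := wgen_conj (μ := (starRingEnd ℂ) ν) (f := f) (x := x)
  rw [hf, Complex.conj_conj] at h
  exact h.symm

/-- conj of second derivative of a real-valued function -/
theorem conj_wgen2_real {f : ℂ → ℂ} (hf : (fun x => (starRingEnd ℂ) (f x)) = f) (ν μ x : ℂ) :
    (starRingEnd ℂ) (wgen ν (wgen μ f) x)
      = wgen ((starRingEnd ℂ) ν) (wgen ((starRingEnd ℂ) μ) f) x := by
  have h1 : (fun x => (starRingEnd ℂ) (wgen μ f x)) = wgen ((starRingEnd ℂ) μ) f :=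
    funext fun x => conj_wgen_real hf μ x
  have h := wgen_conj (μ := (starRingEnd ℂ) ν) (f := wgen μ f) (x := x)
  rw [h1, Complex.conj_conj] at h
  exact h.symm

theorem wgen_comm_fun {μ ν : ℂ} {f : ℂ → ℂ} (hf : ContDiff ℝ (⊤ : ℕ∞) f) :
    wgen μ (wgen ν f) = wgen ν (wgen μ f) :=
  funext fun x => wgen_comm hf x

theorem wgen_congr {μ : ℂ} {f g : ℂ → ℂ} (h : ∀ y, f y = g y) (x : ℂ) :
    wgen μ f x = wgen μ g x := by rw [funext h]
end ConjHelpers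

/-- mid-shape second-derivative expansion -/
theorem wgen_expand_mid (μ : ℂ) (f1 f2 f3 f4 f5 f6 : ℂ → ℂ)
    (s1 : ContDiff ℝ (⊤ : ℕ∞) f1) (s2 : ContDiff ℝ (⊤ : ℕ∞) f2) (s3 : ContDiff ℝ (⊤ : ℕ∞) f3)
    (s4 : ContDiff ℝ (⊤ : ℕ∞) f4) (s5 : ContDiff ℝ (⊤ : ℕ∞) f5) (s6 : ContDiff ℝ (⊤ : ℕ∞) f6) (x : ℂ) :
    wgen μ (fun y => 2 * f1 y + (4 * (f2 y * f3 y) + f4 y * f5 y) + 2 * f6 y) x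
      = 2 * wgen μ f1 x
        + (4 * (wgen μ f2 x * f3 x + f2 x * wgen μ f3 x)
          + (wgen μ f4 x * f5 x + f4 x * wgen μ f5 x)) + 2 * wgen μ f6 x := by
  have d23 : DifferentiableAt ℝ (fun y => 4 * (f2 y * f3 y)) x :=
    (contDiff_const.mul (s2.mul s3)).differentiable (by simp) x
  have d45 : DifferentiableAt ℝ (fun y => f4 y * f5 y) x :=
    ((s4.mul s5).differentiable (by simp)) x
  rw [wgen_add ((((contDiff_const.mul s1).add ((contDiff_const.mul (s2.mul s3)).add
      (s4.mul s5))).differentiable (by simp)) x)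
      (((contDiff_const.mul s6).differentiable (by simp)) x),
    wgen_add (((contDiff_const.mul s1).differentiable (by simp)) x) (d23.fun_add d45),
    wgen_add d23 d45,
    wgen_const_mul 2 (contdiff_top_diffAt s1 x), wgen_const_mul 2 (contdiff_top_diffAt s6 x),
    wgen_const_mul 4 (((s2.mul s3).differentiable (by simp)) x),
    wgen_mul (contdiff_top_diffAt s2 x) (contdiff_top_diffAt s3 x),
    wgen_mul (contdiff_top_diffAt s4 x) (contdiff_top_diffAt s5 x)]


/-- the reality Lemma: given the conformal Gauss equation, the conformal
Codazzi equation, and `D_z q = 2γ_z̄ κ − 2γ D_z̄ κ`, if `γ̂ := 2γ_zz + cγ + 2(q,κ)` is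
real then `2γ̂_z̄z̄ + c̄ γ̂` is also real. -/
theorem reality_lemma {m : ℕ}
    (κ q : ℂ → EuclideanSpace ℂ (Fin m)) (c γ : ℂ → ℂ)
    (hκs : ContDiff ℝ (⊤ : ℕ∞) κ) (hqs : ContDiff ℝ (⊤ : ℕ∞) q)
    (hcs : ContDiff ℝ (⊤ : ℕ∞) c) (hγs : ContDiff ℝ (⊤ : ℕ∞) γ)
    (hκreal : ∀ x i, (κ x i).im = 0)
    (hqreal : ∀ x i, (q x i).im = 0)
    (hγreal : ∀ x, (γ x).im = 0)
    (hGauss : ∀ x, wzb c x = 4 * wz (fun y => ∑ i, κ y i * κ y i) x)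
    (hCodazzi : ∀ x i,
      (wzb (wzb κ) x i + (1 / 2) * (starRingEnd ℂ) (c x) * κ x i).im = 0)
    (hqeq : ∀ x, wz q x = (2 * wzb γ x) • κ x - (2 * γ x) • wzb κ x)
    (γhat : ℂ → ℂ)
    (hγhat : γhat = fun x => 2 * wz (wz γ) x + c x * γ x + 2 * ∑ i, q x i * κ x i)
    (hγhatreal : ∀ x, (γhat x).im = 0) :
    ∀ x, (2 * wzb (wzb γhat) x + (starRingEnd ℂ) (c x) * γhat x).im = 0 := by
  simp only [wz_eq_wgen, wzb_eq_wgen] at hGauss hCodazzi hqeq hγhat ⊢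
  -- smoothness of components
  have sk : ∀ i, ContDiff ℝ (⊤ : ℕ∞) (fun y => κ y i) := fun i =>
    (ContinuousLinearMap.contDiff
      ((EuclideanSpace.proj (𝕜 := ℂ) i).restrictScalars ℝ)).comp hκs
  have sq : ∀ i, ContDiff ℝ (⊤ : ℕ∞) (fun y => q y i) := fun i =>
    (ContinuousLinearMap.contDiff
      ((EuclideanSpace.proj (𝕜 := ℂ) i).restrictScalars ℝ)).comp hqs
  have sa : ContDiff ℝ (⊤ : ℕ∞) (fun y => ∑ i, κ y i * κ y i) :=
    ContDiff.sum fun i _ => (sk i).mul (sk i)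
  have spq : ContDiff ℝ (⊤ : ℕ∞) (fun y => ∑ i, q y i * κ y i) :=
    ContDiff.sum fun i _ => (sq i).mul (sk i)
  have scb : ContDiff ℝ (⊤ : ℕ∞) (fun x => (starRingEnd ℂ) (c x)) :=
    (ContinuousLinearMap.contDiff (Complex.conjCLE.toContinuousLinearMap)).comp hcs
  -- realness (function level)
  have rγ : (fun x => (starRingEnd ℂ) (γ x)) = γ :=
    funext fun x => Complex.conj_eq_iff_im.mpr (hγreal x)
  have rk : ∀ i, (fun x => (starRingEnd ℂ) (κ x i)) = fun x => κ x i := fun i =>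
    funext fun x => Complex.conj_eq_iff_im.mpr (hκreal x i)
  have rq : ∀ i, (fun x => (starRingEnd ℂ) (q x i)) = fun x => q x i := fun i =>
    funext fun x => Complex.conj_eq_iff_im.mpr (hqreal x i)
  have rA : ∀ x, (starRingEnd ℂ) (∑ i, κ x i * κ x i) = ∑ i, κ x i * κ x i := fun x => by
    rw [map_sum]
    exact Finset.sum_congr rfl fun i _ => by
      rw [map_mul, Complex.conj_eq_iff_im.mpr (hκreal x i)]
  have ra : (fun x => (starRingEnd ℂ) (∑ i, κ x i * κ x i)) =
      fun x => ∑ i, κ x i * κ x i := funext rA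
  have rP : ∀ x, (starRingEnd ℂ) (∑ i, q x i * κ x i) = ∑ i, q x i * κ x i := fun x => by
    rw [map_sum]
    exact Finset.sum_congr rfl fun i _ => by
      rw [map_mul, Complex.conj_eq_iff_im.mpr (hqreal x i),
        Complex.conj_eq_iff_im.mpr (hκreal x i)]
  have rγhat : (fun x => (starRingEnd ℂ) (γhat x)) = γhat :=
    funext fun x => Complex.conj_eq_iff_im.mpr (hγhatreal x)
  -- componentwise projection
  have hproj : ∀ (f : ℂ → EuclideanSpace ℂ (Fin m)), ContDiff ℝ (⊤ : ℕ∞) f → ∀ (μ : ℂ) i x,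
      wgen μ (fun y => f y i) x = wgen μ f x i := fun f hf μ i x =>
    wgen_clm_comp (EuclideanSpace.proj i) (hf.differentiable (by simp) x)
  -- first derivative of a
  have hDa : ∀ (μ x : ℂ), wgen μ (fun y => ∑ i, κ y i * κ y i) x
      = 2 * ∑ i, κ x i * wgen μ (fun y => κ y i) x := fun μ x => by
    have h := sum_sq_deriv (fun i y => κ y i) sk μ x
    beta_reduce at h
    exact h
  -- scalar form of the q-equation
  have hq3 : ∀ i x, wgen (-Complex.I) (fun y => q y i) x
      = 2 * wgen Complex.I γ x * κ x i - 2 * γ x * wgen Complex.I (fun y => κ y i) x := by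
    intro i x
    have h : wgen (-Complex.I) q x i
        = (((2 * wgen Complex.I γ x) • κ x - (2 * γ x) • wgen Complex.I κ x) :
            EuclideanSpace ℂ (Fin m)) i := by rw [hqeq x]
    rw [← hproj q hqs (-Complex.I) i x] at h
    simpa [smul_eq_mul, hproj κ hκs Complex.I i x] using h
  have hq3b : ∀ i x, wgen Complex.I (fun y => q y i) x
      = 2 * wgen (-Complex.I) γ x * κ x i
        - 2 * γ x * wgen (-Complex.I) (fun y => κ y i) x := by
    intro i x
    have h := congrArg (starRingEnd ℂ) (hq3 i x)
    simp only [map_sub, map_mul, map_ofNat, conj_wgen_real (rq i), conj_wgen_real rγ,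
      conj_wgen_real (rk i), Complex.conj_eq_iff_im.mpr (hγreal x),
      Complex.conj_eq_iff_im.mpr (hκreal x i), map_neg, Complex.conj_I, neg_neg] at h
    exact h
  -- scalar Codazzi
  have hK : ∀ i x, wgen Complex.I (wgen Complex.I (fun y => κ y i)) x
      = wgen (-Complex.I) (wgen (-Complex.I) (fun y => κ y i)) x
        + (2:ℂ)⁻¹ * ((c x - (starRingEnd ℂ) (c x)) * κ x i) := by
    intro i x
    have hA : wgen Complex.I (fun y => κ y i) = fun z => wgen Complex.I κ z i :=
      funext fun z => hproj κ hκs Complex.I i z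
    have hp2 : wgen Complex.I (wgen Complex.I (fun y => κ y i)) x
        = wgen Complex.I (wgen Complex.I κ) x i := by
      rw [hA]; exact hproj (wgen Complex.I κ) (wgen_smooth hκs) Complex.I i x
    have h0 := Complex.conj_eq_iff_im.mpr (hCodazzi x i)
    rw [← hp2] at h0
    simp only [map_add, map_mul, map_div₀, map_one, map_ofNat, conj_wgen2_real (rk i),
      Complex.conj_conj, Complex.conj_eq_iff_im.mpr (hκreal x i), map_neg,
      Complex.conj_I, neg_neg] at h0
    linear_combination -h0
  -- reality of γ̂ in derivative form
  have hR : ∀ x, wgen Complex.I (wgen Complex.I γ) x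
      = wgen (-Complex.I) (wgen (-Complex.I) γ) x
        + (2:ℂ)⁻¹ * ((c x - (starRingEnd ℂ) (c x)) * γ x) := by
    intro x
    have h0 := Complex.conj_eq_iff_im.mpr (hγhatreal x)
    rw [hγhat] at h0
    beta_reduce at h0
    simp only [map_add, map_mul, map_ofNat, conj_wgen2_real rγ, rP x,
      Complex.conj_eq_iff_im.mpr (hγreal x), map_neg, Complex.conj_I, neg_neg] at h0
    linear_combination (2:ℂ)⁻¹ * h0
  -- conjugated Gauss
  have hGsb : ∀ x, wgen (-Complex.I) (fun y => (starRingEnd ℂ) (c y)) x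
      = 4 * wgen Complex.I (fun y => ∑ i, κ y i * κ y i) x := by
    intro x
    have h := wgen_conj (μ := -Complex.I) (f := c) (x := x)
    simp only [map_neg, Complex.conj_I, neg_neg] at h
    rw [hGauss x] at h
    simp only [map_mul, map_ofNat, conj_wgen_real ra, map_neg, Complex.conj_I, neg_neg] at h
    exact h
  -- smoothness of the first-derivative sum terms
  have sU : ContDiff ℝ (⊤ : ℕ∞) (fun y => ∑ i, q y i * wgen (-Complex.I) (fun z => κ z i) y) :=
    ContDiff.sum fun i _ => (sq i).mul (wgen_smooth (sk i))
  have sV : ContDiff ℝ (⊤ : ℕ∞) (fun y => ∑ i, q y i * wgen Complex.I (fun z => κ z i) y) :=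
    ContDiff.sum fun i _ => (sq i).mul (wgen_smooth (sk i))
  -- first derivatives of (q,κ)
  have hpqD : ∀ x, wgen (-Complex.I) (fun y => ∑ i, q y i * κ y i) x
      = 2 * (wgen Complex.I γ x * ∑ i, κ x i * κ x i)
        - γ x * wgen Complex.I (fun y => ∑ i, κ y i * κ y i) x
        + ∑ i, q x i * wgen (-Complex.I) (fun y => κ y i) x := by
    intro x
    have e := sum_mul_deriv (fun i y => q y i) (fun i y => κ y i) sq sk (-Complex.I) x
    beta_reduce at e
    rw [e]
    have e2 : ∑ i, (wgen (-Complex.I) (fun y => q y i) x * κ x i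
          + q x i * wgen (-Complex.I) (fun y => κ y i) x)
        = (2 * wgen Complex.I γ x) * (∑ i, κ x i * κ x i)
          - (2 * γ x) * (∑ i, κ x i * wgen Complex.I (fun y => κ y i) x)
          + ∑ i, q x i * wgen (-Complex.I) (fun y => κ y i) x := by
      rw [Finset.mul_sum, Finset.mul_sum, ← Finset.sum_sub_distrib, ← Finset.sum_add_distrib]
      refine Finset.sum_congr rfl fun i _ => ?_
      rw [hq3 i x]; ring
    rw [e2]
    linear_combination γ x * hDa Complex.I x
  have hpqB : ∀ x, wgen Complex.I (fun y => ∑ i, q y i * κ y i) x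
      = 2 * (wgen (-Complex.I) γ x * ∑ i, κ x i * κ x i)
        - γ x * wgen (-Complex.I) (fun y => ∑ i, κ y i * κ y i) x
        + ∑ i, q x i * wgen Complex.I (fun y => κ y i) x := by
    intro x
    have e := sum_mul_deriv (fun i y => q y i) (fun i y => κ y i) sq sk Complex.I x
    beta_reduce at e
    rw [e]
    have e2 : ∑ i, (wgen Complex.I (fun y => q y i) x * κ x i
          + q x i * wgen Complex.I (fun y => κ y i) x)
        = (2 * wgen (-Complex.I) γ x) * (∑ i, κ x i * κ x i)
          - (2 * γ x) * (∑ i, κ x i * wgen (-Complex.I) (fun y => κ y i) x)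
          + ∑ i, q x i * wgen Complex.I (fun y => κ y i) x := by
      rw [Finset.mul_sum, Finset.mul_sum, ← Finset.sum_sub_distrib, ← Finset.sum_add_distrib]
      refine Finset.sum_congr rfl fun i _ => ?_
      rw [hq3b i x]; ring
    rw [e2]
    linear_combination γ x * hDa (-Complex.I) x
  -- second derivatives of (q,κ)
  have hDDpq : ∀ x, wgen (-Complex.I) (wgen (-Complex.I) (fun y => ∑ i, q y i * κ y i)) x
      = 2 * (wgen Complex.I (wgen (-Complex.I) γ) x * ∑ i, κ x i * κ x i)
        + 3 * (wgen Complex.I γ x * wgen (-Complex.I) (fun y => ∑ i, κ y i * κ y i) x)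
        - wgen (-Complex.I) γ x * wgen Complex.I (fun y => ∑ i, κ y i * κ y i) x
        - γ x * wgen Complex.I (wgen (-Complex.I) (fun y => ∑ i, κ y i * κ y i)) x
        - 2 * (γ x * ∑ i, wgen (-Complex.I) (fun y => κ y i) x
            * wgen Complex.I (fun y => κ y i) x)
        + ∑ i, q x i * wgen (-Complex.I) (wgen (-Complex.I) (fun y => κ y i)) x := by
    intro x
    rw [show wgen (-Complex.I) (fun y => ∑ i, q y i * κ y i)
        = (fun x => 2 * (wgen Complex.I γ x * ∑ i, κ x i * κ x i)
            - γ x * wgen Complex.I (fun y => ∑ i, κ y i * κ y i) x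
            + ∑ i, q x i * wgen (-Complex.I) (fun y => κ y i) x) from funext hpqD]
    have e := wgen_expand3 (-Complex.I) (wgen Complex.I γ) (fun y => ∑ i, κ y i * κ y i) γ
      (wgen Complex.I (fun y => ∑ i, κ y i * κ y i))
      (fun x => ∑ i, q x i * wgen (-Complex.I) (fun y => κ y i) x)
      (wgen_smooth hγs) sa hγs (wgen_smooth sa) sU x
    beta_reduce at e
    rw [e, wgen_comm_fun (μ := -Complex.I) (ν := Complex.I) hγs,
      wgen_comm_fun (μ := -Complex.I) (ν := Complex.I) sa]
    have e5 := sum_mul_deriv (fun i y => q y i)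
      (fun i => wgen (-Complex.I) (fun z => κ z i)) sq
      (fun i => wgen_smooth (sk i)) (-Complex.I) x
    beta_reduce at e5
    have e6 : ∑ i, (wgen (-Complex.I) (fun y => q y i) x
          * wgen (-Complex.I) (fun y => κ y i) x
          + q x i * wgen (-Complex.I) (wgen (-Complex.I) (fun y => κ y i)) x)
        = (2 * wgen Complex.I γ x) * (∑ i, κ x i * wgen (-Complex.I) (fun y => κ y i) x)
          - (2 * γ x) * (∑ i, wgen (-Complex.I) (fun y => κ y i) x
              * wgen Complex.I (fun y => κ y i) x)
          + ∑ i, q x i * wgen (-Complex.I) (wgen (-Complex.I) (fun y => κ y i)) x := by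
      rw [Finset.mul_sum, Finset.mul_sum, ← Finset.sum_sub_distrib, ← Finset.sum_add_distrib]
      refine Finset.sum_congr rfl fun i _ => ?_
      rw [hq3 i x]; ring
    linear_combination e5 + e6 - wgen Complex.I γ x * hDa (-Complex.I) x
  have hBBpq : ∀ x, wgen Complex.I (wgen Complex.I (fun y => ∑ i, q y i * κ y i)) x
      = 2 * (wgen Complex.I (wgen (-Complex.I) γ) x * ∑ i, κ x i * κ x i)
        + 3 * (wgen (-Complex.I) γ x * wgen Complex.I (fun y => ∑ i, κ y i * κ y i) x)
        - wgen Complex.I γ x * wgen (-Complex.I) (fun y => ∑ i, κ y i * κ y i) x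
        - γ x * wgen Complex.I (wgen (-Complex.I) (fun y => ∑ i, κ y i * κ y i)) x
        - 2 * (γ x * ∑ i, wgen (-Complex.I) (fun y => κ y i) x
            * wgen Complex.I (fun y => κ y i) x)
        + ∑ i, q x i * wgen (-Complex.I) (wgen (-Complex.I) (fun y => κ y i)) x
        + (2:ℂ)⁻¹ * ((c x - (starRingEnd ℂ) (c x)) * ∑ i, q x i * κ x i) := by
    intro x
    rw [show wgen Complex.I (fun y => ∑ i, q y i * κ y i)
        = (fun x => 2 * (wgen (-Complex.I) γ x * ∑ i, κ x i * κ x i)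
            - γ x * wgen (-Complex.I) (fun y => ∑ i, κ y i * κ y i) x
            + ∑ i, q x i * wgen Complex.I (fun y => κ y i) x) from funext hpqB]
    have e := wgen_expand3 Complex.I (wgen (-Complex.I) γ) (fun y => ∑ i, κ y i * κ y i) γ
      (wgen (-Complex.I) (fun y => ∑ i, κ y i * κ y i))
      (fun x => ∑ i, q x i * wgen Complex.I (fun y => κ y i) x)
      (wgen_smooth hγs) sa hγs (wgen_smooth sa) sV x
    beta_reduce at e
    rw [e]
    have e5 := sum_mul_deriv (fun i y => q y i)
      (fun i => wgen Complex.I (fun z => κ z i)) sq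
      (fun i => wgen_smooth (sk i)) Complex.I x
    beta_reduce at e5
    have e6 : ∑ i, (wgen Complex.I (fun y => q y i) x
          * wgen Complex.I (fun y => κ y i) x
          + q x i * wgen Complex.I (wgen Complex.I (fun y => κ y i)) x)
        = (2 * wgen (-Complex.I) γ x) * (∑ i, κ x i * wgen Complex.I (fun y => κ y i) x)
          - (2 * γ x) * (∑ i, wgen (-Complex.I) (fun y => κ y i) x
              * wgen Complex.I (fun y => κ y i) x)
          + (∑ i, q x i * wgen (-Complex.I) (wgen (-Complex.I) (fun y => κ y i)) x
            + (2:ℂ)⁻¹ * ((c x - (starRingEnd ℂ) (c x)) * ∑ i, q x i * κ x i)) := by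
      simp only [Finset.mul_sum]
      rw [← Finset.sum_sub_distrib, ← Finset.sum_add_distrib, ← Finset.sum_add_distrib]
      refine Finset.sum_congr rfl fun i _ => ?_
      rw [hq3b i x, hK i x]; ring
    linear_combination e5 + e6 - wgen (-Complex.I) γ x * hDa Complex.I x
  -- the second representation of γ̂
  have hgB : γhat = fun x => 2 * wgen Complex.I (wgen Complex.I γ) x
      + (starRingEnd ℂ) (c x) * γ x + 2 * ∑ i, q x i * κ x i := by
    funext x
    have h1 := congrFun hγhat x
    beta_reduce at h1
    linear_combination h1 - 2 * hR x
  -- first derivatives of γ̂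
  have hB1 : ∀ x, wgen Complex.I γhat x
      = 2 * wgen Complex.I (wgen (-Complex.I) (wgen (-Complex.I) γ)) x
        + (4 * (wgen (-Complex.I) (fun y => ∑ i, κ y i * κ y i) x * γ x)
          + c x * wgen Complex.I γ x)
        + 2 * wgen Complex.I (fun y => ∑ i, q y i * κ y i) x := by
    intro x
    rw [hγhat]
    have e := wgen_expand_hat Complex.I (wgen (-Complex.I) (wgen (-Complex.I) γ)) c γ
      (fun y => ∑ i, q y i * κ y i) (wgen_smooth (wgen_smooth hγs)) hcs hγs spq x
    beta_reduce at e
    rw [e]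
    linear_combination γ x * hGauss x
  have hD1 : ∀ x, wgen (-Complex.I) γhat x
      = 2 * wgen Complex.I (wgen Complex.I (wgen (-Complex.I) γ)) x
        + (4 * (wgen Complex.I (fun y => ∑ i, κ y i * κ y i) x * γ x)
          + (starRingEnd ℂ) (c x) * wgen (-Complex.I) γ x)
        + 2 * wgen (-Complex.I) (fun y => ∑ i, q y i * κ y i) x := by
    intro x
    rw [hgB]
    have e := wgen_expand_hat (-Complex.I) (wgen Complex.I (wgen Complex.I γ))
      (fun x => (starRingEnd ℂ) (c x)) γ (fun y => ∑ i, q y i * κ y i)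
      (wgen_smooth (wgen_smooth hγs)) scb hγs spq x
    beta_reduce at e
    rw [e, wgen_comm_fun (μ := -Complex.I) (ν := Complex.I)
        (f := wgen Complex.I γ) (wgen_smooth hγs),
      wgen_comm_fun (μ := -Complex.I) (ν := Complex.I) (f := γ) hγs]
    linear_combination γ x * hGsb x
  -- second derivatives of γ̂
  have hB2 : ∀ x, wgen Complex.I (wgen Complex.I γhat) x
      = 2 * wgen Complex.I (wgen Complex.I (wgen (-Complex.I) (wgen (-Complex.I) γ))) x
        + 4 * (wgen Complex.I (wgen (-Complex.I) (fun y => ∑ i, κ y i * κ y i)) x * γ x)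
        + 8 * (wgen (-Complex.I) (fun y => ∑ i, κ y i * κ y i) x * wgen Complex.I γ x)
        + c x * wgen Complex.I (wgen Complex.I γ) x
        + 4 * (wgen Complex.I (wgen (-Complex.I) γ) x * ∑ i, κ x i * κ x i)
        + 6 * (wgen (-Complex.I) γ x * wgen Complex.I (fun y => ∑ i, κ y i * κ y i) x)
        - 2 * (wgen Complex.I γ x * wgen (-Complex.I) (fun y => ∑ i, κ y i * κ y i) x)
        - 2 * (γ x * wgen Complex.I (wgen (-Complex.I) (fun y => ∑ i, κ y i * κ y i)) x)
        - 4 * (γ x * ∑ i, wgen (-Complex.I) (fun y => κ y i) x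
            * wgen Complex.I (fun y => κ y i) x)
        + 2 * ∑ i, q x i * wgen (-Complex.I) (wgen (-Complex.I) (fun y => κ y i)) x
        + (c x - (starRingEnd ℂ) (c x)) * ∑ i, q x i * κ x i := by
    intro x
    rw [show wgen Complex.I γhat
        = (fun x => 2 * wgen Complex.I (wgen (-Complex.I) (wgen (-Complex.I) γ)) x
          + (4 * (wgen (-Complex.I) (fun y => ∑ i, κ y i * κ y i) x * γ x)
            + c x * wgen Complex.I γ x)
          + 2 * wgen Complex.I (fun y => ∑ i, q y i * κ y i) x) from funext hB1]
    have e := wgen_expand_mid Complex.I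
      (wgen Complex.I (wgen (-Complex.I) (wgen (-Complex.I) γ)))
      (wgen (-Complex.I) (fun y => ∑ i, κ y i * κ y i)) γ c (wgen Complex.I γ)
      (wgen Complex.I (fun y => ∑ i, q y i * κ y i))
      (wgen_smooth (wgen_smooth (wgen_smooth hγs))) (wgen_smooth sa) hγs hcs
      (wgen_smooth hγs) (wgen_smooth spq) x
    rw [e]
    linear_combination wgen Complex.I γ x * hGauss x + 2 * hBBpq x
  have hD2 : ∀ x, wgen (-Complex.I) (wgen (-Complex.I) γhat) x
      = 2 * wgen Complex.I (wgen Complex.I (wgen (-Complex.I) (wgen (-Complex.I) γ))) x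
        + 4 * (wgen Complex.I (wgen (-Complex.I) (fun y => ∑ i, κ y i * κ y i)) x * γ x)
        + 8 * (wgen Complex.I (fun y => ∑ i, κ y i * κ y i) x * wgen (-Complex.I) γ x)
        + (starRingEnd ℂ) (c x) * wgen (-Complex.I) (wgen (-Complex.I) γ) x
        + 4 * (wgen Complex.I (wgen (-Complex.I) γ) x * ∑ i, κ x i * κ x i)
        + 6 * (wgen Complex.I γ x * wgen (-Complex.I) (fun y => ∑ i, κ y i * κ y i) x)
        - 2 * (wgen (-Complex.I) γ x * wgen Complex.I (fun y => ∑ i, κ y i * κ y i) x)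
        - 2 * (γ x * wgen Complex.I (wgen (-Complex.I) (fun y => ∑ i, κ y i * κ y i)) x)
        - 4 * (γ x * ∑ i, wgen (-Complex.I) (fun y => κ y i) x
            * wgen Complex.I (fun y => κ y i) x)
        + 2 * ∑ i, q x i * wgen (-Complex.I) (wgen (-Complex.I) (fun y => κ y i)) x := by
    intro x
    rw [show wgen (-Complex.I) γhat
        = (fun x => 2 * wgen Complex.I (wgen Complex.I (wgen (-Complex.I) γ)) x
          + (4 * (wgen Complex.I (fun y => ∑ i, κ y i * κ y i) x * γ x)
            + (starRingEnd ℂ) (c x) * wgen (-Complex.I) γ x)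
          + 2 * wgen (-Complex.I) (fun y => ∑ i, q y i * κ y i) x) from funext hD1]
    have e := wgen_expand_mid (-Complex.I)
      (wgen Complex.I (wgen Complex.I (wgen (-Complex.I) γ)))
      (wgen Complex.I (fun y => ∑ i, κ y i * κ y i)) γ
      (fun x => (starRingEnd ℂ) (c x)) (wgen (-Complex.I) γ)
      (wgen (-Complex.I) (fun y => ∑ i, q y i * κ y i))
      (wgen_smooth (wgen_smooth (wgen_smooth hγs))) (wgen_smooth sa) hγs scb
      (wgen_smooth hγs) (wgen_smooth spq) x
    beta_reduce at e
    rw [e, wgen_comm_fun (μ := -Complex.I) (ν := Complex.I)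
        (f := wgen Complex.I (wgen (-Complex.I) γ)) (wgen_smooth (wgen_smooth hγs)),
      wgen_comm_fun (μ := -Complex.I) (ν := Complex.I)
        (f := wgen (-Complex.I) γ) (wgen_smooth hγs),
      wgen_comm_fun (μ := -Complex.I) (ν := Complex.I)
        (f := (fun y => ∑ i, κ y i * κ y i)) sa]
    linear_combination wgen (-Complex.I) γ x * hGsb x + 2 * hDDpq x
  -- conclusion
  intro x
  rw [← Complex.conj_eq_iff_im]
  have cγh := conj_wgen2_real rγhat Complex.I Complex.I x
  simp only [Complex.conj_I] at cγh
  have hexp : (starRingEnd ℂ) (2 * wgen Complex.I (wgen Complex.I γhat) x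
      + (starRingEnd ℂ) (c x) * γhat x)
      = 2 * wgen (-Complex.I) (wgen (-Complex.I) γhat) x + c x * γhat x := by
    rw [map_add, map_mul, map_mul, map_ofNat, cγh, Complex.conj_conj,
      Complex.conj_eq_iff_im.mpr (hγhatreal x)]
  rw [hexp]
  have hgam := congrFun hγhat x
  beta_reduce at hgam
  linear_combination 2 * hD2 x - 2 * hB2 x - 2 * c x * hR x
    + (c x - (starRingEnd ℂ) (c x)) * hgam
end

section
/- Under the hypotheses of the reality lemma (conformal Gauss and Codazzi equations, D_z q = 2γ_z̄ κ − 2γ D_z̄ κ, and γ real with 2γ_zz + cγ + 2(q,κ) real), the W-valued 1-form with (0,1)-part 2γ_z̄ κ − 2γ D_z̄ κ is closed: Im(D_z̄(γ_z̄ κ − γ D_z̄ κ)) = 0. -/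
lemma wzb_contDiff {F : Type*} [NormedAddCommGroup F] [NormedSpace ℂ F]
    {f : ℂ → F} (hf : ContDiff ℝ (⊤ : ℕ∞) f) : ContDiff ℝ (⊤ : ℕ∞) (wzb f) := by
  unfold wzb
  have h1 : ContDiff ℝ (⊤ : ℕ∞) (fun x => fderiv ℝ f x) := hf.fderiv_right (by simp)
  exact ((h1.clm_apply contDiff_const).add
    ((h1.clm_apply contDiff_const).const_smul _)).const_smul _

lemma wzb_sub {F : Type*} [NormedAddCommGroup F] [NormedSpace ℂ F]
    {f g : ℂ → F} (hf : ContDiff ℝ (⊤ : ℕ∞) f) (hg : ContDiff ℝ (⊤ : ℕ∞) g) (x : ℂ) :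
    wzb (fun y => f y - g y) x = wzb f x - wzb g x := by
  unfold wzb
  rw [fderiv_fun_sub (hf.differentiable (by simp) x) (hg.differentiable (by simp) x)]
  simp only [ContinuousLinearMap.sub_apply]
  module

lemma wzb_smul {F : Type*} [NormedAddCommGroup F] [NormedSpace ℂ F]
    {g : ℂ → ℂ} {h : ℂ → F} (hg : ContDiff ℝ (⊤ : ℕ∞) g) (hh : ContDiff ℝ (⊤ : ℕ∞) h) (x : ℂ) :
    wzb (fun y => g y • h y) x = wzb g x • h x + g x • wzb h x := by
  unfold wzb
  rw [fderiv_fun_smul (hg.differentiable (by simp) x) (hh.differentiable (by simp) x)]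
  simp only [ContinuousLinearMap.add_apply, ContinuousLinearMap.smul_apply,
    ContinuousLinearMap.smulRight_apply, smul_eq_mul]
  module

/-- under the hypotheses of the reality lemma (conformal Gauss and Codazzi
equations, `D_z q = 2γ_z̄κ − 2γD_z̄κ`, `γ` real with `2γ_zz + cγ + 2(q,κ)` real, and
`2γ_z̄z̄ + c̄γ` real), the right-hand side of the recursion is integrable:
`Im(D_z̄(γ_z̄ κ − γ D_z̄ κ)) = 0`. -/
theorem recursion_rhs_integrable {m : ℕ}
    (κ q : ℂ → EuclideanSpace ℂ (Fin m)) (c γ : ℂ → ℂ)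
    (hκs : ContDiff ℝ (⊤ : ℕ∞) κ) (hqs : ContDiff ℝ (⊤ : ℕ∞) q)
    (hcs : ContDiff ℝ (⊤ : ℕ∞) c) (hγs : ContDiff ℝ (⊤ : ℕ∞) γ)
    (hκreal : ∀ x i, (κ x i).im = 0)
    (hqreal : ∀ x i, (q x i).im = 0)
    (hγreal : ∀ x, (γ x).im = 0)
    (hGauss : ∀ x, wzb c x = 4 * wz (fun y => ∑ i, κ y i * κ y i) x)
    (hCodazzi : ∀ x i,
      (wzb (wzb κ) x i + (1 / 2) * (starRingEnd ℂ) (c x) * κ x i).im = 0)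
    (hqeq : ∀ x, wz q x = (2 * wzb γ x) • κ x - (2 * γ x) • wzb κ x)
    (hhatreal : ∀ x, (2 * wz (wz γ) x + c x * γ x + 2 * ∑ i, q x i * κ x i).im = 0)
    (hbarreal : ∀ x, (2 * wzb (wzb γ) x + (starRingEnd ℂ) (c x) * γ x).im = 0) :
    ∀ x i, (wzb (fun y => wzb γ y • κ y - γ y • wzb κ y) x i).im = 0 := by
  intro x i
  have hsm : IsBoundedBilinearMap ℝ fun p : ℂ × EuclideanSpace ℂ (Fin m) => p.1 • p.2 :=
    isBoundedBilinearMap_smul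
  have h1 : ContDiff ℝ (⊤ : ℕ∞) (fun y => wzb γ y • κ y) :=
    hsm.contDiff.comp ((wzb_contDiff hγs).prodMk hκs)
  have h2 : ContDiff ℝ (⊤ : ℕ∞) (fun y => γ y • wzb κ y) :=
    hsm.contDiff.comp (hγs.prodMk (wzb_contDiff hκs))
  have key : wzb (fun y => wzb γ y • κ y - γ y • wzb κ y) x
      = wzb (wzb γ) x • κ x - γ x • wzb (wzb κ) x := by
    rw [wzb_sub h1 h2 x, wzb_smul (wzb_contDiff hγs) hκs x,
      wzb_smul hγs (wzb_contDiff hκs) x]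
    abel
  rw [key]
  have hb := hbarreal x
  have hc := hCodazzi x i
  have hk := hκreal x i
  have hg := hγreal x
  simp only [PiLp.sub_apply, PiLp.smul_apply, smul_eq_mul, Complex.sub_im,
    Complex.mul_im, Complex.add_im, hk, hg, mul_zero, zero_mul, add_zero, zero_add] at *
  norm_num at hb hc ⊢
  linear_combination (κ x i).re / 2 * hb - (γ x).re * hc
end

section
/- For the cylinder lift ψ(u,v) = φ₁(u) + φ₂(v) + v₀ + ½(⟨φ₁,φ₁⟩ + ⟨φ₂,φ₂⟩)v_∞, with φ₁ a unit-speed plane curve with curvature 𝐤 (φ₁'' = 𝐤n) and φ₂ a unit-speed line (φ₂'' = 0), one has ψ_zz = −(𝐤²/8)ψ + (𝐤/4)N where N = n + ⟨n,φ₁⟩v_∞ + (𝐤/2)ψ. -/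
lemma lift_deriv2 {V : Type*} [NormedAddCommGroup V] [NormedSpace ℝ V]
    (B : V →L[ℝ] V →L[ℝ] ℝ) (vinf : V) (φ : ℝ → V) (hφ : ContDiff ℝ (⊤ : ℕ∞) φ) (u : ℝ) :
    deriv (deriv (fun u' => φ u' + (1 / 2 * B (φ u') (φ u')) • vinf)) u
      = deriv (deriv φ) u
        + (1 / 2 * (B (deriv (deriv φ) u) (φ u) + B (deriv φ u) (deriv φ u)
            + (B (deriv φ u) (deriv φ u) + B (φ u) (deriv (deriv φ) u)))) • vinf := by
  have hphi : ContDiff ℝ ((⊤ : ℕ∞) : WithTop ℕ∞) φ := hφ.of_le (by simp)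
  have hφd : ContDiff ℝ ((⊤ : ℕ∞) : WithTop ℕ∞) (deriv φ) := (contDiff_infty_iff_deriv.mp hphi).2
  have hφ' : ∀ x, HasDerivAt φ (deriv φ x) x := fun x =>
    ((hφ.differentiable (by simp)) x).hasDerivAt
  have hφ'' : ∀ x, HasDerivAt (deriv φ) (deriv (deriv φ) x) x := fun x =>
    ((hφd.differentiable (by simp)) x).hasDerivAt
  have key : ∀ x, HasDerivAt (fun u' => φ u' + (1 / 2 * B (φ u') (φ u')) • vinf)
      (deriv φ x + (1 / 2 * (B (deriv φ x) (φ x) + B (φ x) (deriv φ x))) • vinf) x := by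
    intro x
    have h1 : HasDerivAt (fun y => B (φ y)) (B (deriv φ x)) x :=
      B.hasFDerivAt.comp_hasDerivAt x (hφ' x)
    have h2 : HasDerivAt (fun y => B (φ y) (φ y))
        (B (deriv φ x) (φ x) + B (φ x) (deriv φ x)) x := h1.clm_apply (hφ' x)
    exact (hφ' x).add (((h2.const_mul (1/2 : ℝ))).smul_const vinf)
  have hd1 : deriv (fun u' => φ u' + (1 / 2 * B (φ u') (φ u')) • vinf)
      = fun x => deriv φ x + (1 / 2 * (B (deriv φ x) (φ x) + B (φ x) (deriv φ x))) • vinf :=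
    funext fun x => (key x).deriv
  rw [hd1]
  have h1 : HasDerivAt (fun y => B (deriv φ y)) (B (deriv (deriv φ) u)) u :=
    B.hasFDerivAt.comp_hasDerivAt u (hφ'' u)
  have h1' : HasDerivAt (fun y => B (φ y)) (B (deriv φ u)) u :=
    B.hasFDerivAt.comp_hasDerivAt u (hφ' u)
  have h2 : HasDerivAt (fun y => B (deriv φ y) (φ y))
      (B (deriv (deriv φ) u) (φ u) + B (deriv φ u) (deriv φ u)) u := h1.clm_apply (hφ' u)
  have h3 : HasDerivAt (fun y => B (φ y) (deriv φ y))
      (B (deriv φ u) (deriv φ u) + B (φ u) (deriv (deriv φ) u)) u := h1'.clm_apply (hφ'' u)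
  have h4 : HasDerivAt
      (fun x => deriv φ x + (1 / 2 * (B (deriv φ x) (φ x) + B (φ x) (deriv φ x))) • vinf)
      (deriv (deriv φ) u
        + (1 / 2 * (B (deriv (deriv φ) u) (φ u) + B (deriv φ u) (deriv φ u)
            + (B (deriv φ u) (deriv φ u) + B (φ u) (deriv (deriv φ) u)))) • vinf) u :=
    (hφ'' u).add (((h2.add h3).const_mul (1/2 : ℝ)).smul_const vinf)
  exact h4.deriv


/-- For the cylinder lift
`ψ(u,v) = φ₁(u) + φ₂(v) + v₀ + ½(⟨φ₁,φ₁⟩ + ⟨φ₂,φ₂⟩)v_∞`, with `φ₁` a unit-speed plane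
curve with curvature `𝐤` (`φ₁'' = 𝐤n`) and `φ₂` a unit-speed line (`φ₂'' = 0`), one has
`ψ_zz = −(𝐤²/8)ψ + (𝐤/4)N` where `N = n + ⟨n,φ₁⟩v_∞ + (𝐤/2)ψ`. -/
theorem cylinder_schwarzian {V : Type*} [NormedAddCommGroup V] [NormedSpace ℝ V]
    (B : V →L[ℝ] V →L[ℝ] ℝ) (hBsymm : ∀ a b, B a b = B b a)
    (v₀ vinf : V) (hv₀ : B v₀ v₀ = 0) (hvinf : B vinf vinf = 0) (hpair : B v₀ vinf = -1)
    (φ₁ φ₂ n : ℝ → V) (kk : ℝ → ℝ)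
    (hφ₁s : ContDiff ℝ (⊤ : ℕ∞) φ₁) (hφ₂s : ContDiff ℝ (⊤ : ℕ∞) φ₂) (hns : ContDiff ℝ (⊤ : ℕ∞) n)
    (hφ₁unit : ∀ u, B (deriv φ₁ u) (deriv φ₁ u) = 1)
    (hnunit : ∀ u, B (n u) (n u) = 1)
    (hnφ₁' : ∀ u, B (n u) (deriv φ₁ u) = 0)
    (hφ₁'' : ∀ u, deriv (deriv φ₁) u = kk u • n u)
    (hn' : ∀ u, deriv n u = -(kk u) • deriv φ₁ u)
    (hφ₂unit : ∀ v, B (deriv φ₂ v) (deriv φ₂ v) = 1)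
    (hφ₂'' : ∀ v, deriv (deriv φ₂) v = 0) :
    ∀ u v,
      (1 / 4 : ℝ) •
        (deriv (deriv (fun u' => φ₁ u' + (1 / 2 * B (φ₁ u') (φ₁ u')) • vinf)) u
          - deriv (deriv (fun v' => φ₂ v' + (1 / 2 * B (φ₂ v') (φ₂ v')) • vinf)) v)
      = (-(kk u) ^ 2 / 8) •
          (φ₁ u + φ₂ v + v₀ + (1 / 2 * (B (φ₁ u) (φ₁ u) + B (φ₂ v) (φ₂ v))) • vinf)
        + (kk u / 4) •
          (n u + B (n u) (φ₁ u) • vinf + (kk u / 2) •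
            (φ₁ u + φ₂ v + v₀ + (1 / 2 * (B (φ₁ u) (φ₁ u) + B (φ₂ v) (φ₂ v))) • vinf)) := by
  intro u v
  rw [lift_deriv2 B vinf φ₁ hφ₁s u, lift_deriv2 B vinf φ₂ hφ₂s v, hφ₁'' u, hφ₂'' v,
    hφ₁unit u, hφ₂unit v]
  simp only [map_smul, ContinuousLinearMap.smul_apply, smul_eq_mul, map_zero,
    ContinuousLinearMap.zero_apply, hBsymm (φ₁ u) (n u)]
  module
end

section
/- In the frame computation for an isothermic surface, the vanishing of the ψ-component of p_{i,z} + η_{∂/∂z}p_{i−1} is a differential consequence of the other four equations: if βᵢ = −2γᵢ,z̄, αᵢ = 2γᵢ,zz̄ + 2(κ,κ)γᵢ, D_z qᵢ = 2γᵢ,z̄κ − 2γᵢD_z̄κ and γᵢ₋₁ = 2γᵢ,zz + cγᵢ + 2(qᵢ,κ) hold, together with the conformal Gauss equation c_z̄ = 4(κ,κ)_z, then αᵢ,z − (c/2)βᵢ − β̄ᵢ(κ,κ) + 2(qᵢ,κ_z̄) + βᵢ₋₁/2 = 0 where βᵢ₋₁ = −2γᵢ₋₁,z̄. -/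
noncomputable def wd {F : Type*} [NormedAddCommGroup F] [NormedSpace ℂ F]
    (e : ℂ) (f : ℂ → F) (x : ℂ) : F :=
  (2 : ℂ)⁻¹ • (fderiv ℝ f x 1 + e • fderiv ℝ f x Complex.I)

variable {F : Type*} [NormedAddCommGroup F] [NormedSpace ℂ F]

lemma wz_eq_wd : (wz : (ℂ → F) → ℂ → F) = wd (-Complex.I) := by
  funext f x; simp [wz, wd, sub_eq_add_neg, neg_smul]

lemma wzb_eq_wd : (wzb : (ℂ → F) → ℂ → F) = wd Complex.I := rfl

lemma wd_add (e : ℂ) (f g : ℂ → F) (x : ℂ)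
    (hf : DifferentiableAt ℝ f x) (hg : DifferentiableAt ℝ g x) :
    wd e (fun y => f y + g y) x = wd e f x + wd e g x := by
  simp only [wd, fderiv_fun_add hf hg, ContinuousLinearMap.add_apply]
  module

lemma wd_mul (e : ℂ) (f g : ℂ → ℂ) (x : ℂ)
    (hf : DifferentiableAt ℝ f x) (hg : DifferentiableAt ℝ g x) :
    wd e (fun y => f y * g y) x = wd e f x * g x + f x * wd e g x := by
  simp only [wd, fderiv_fun_mul hf hg, ContinuousLinearMap.add_apply,
    ContinuousLinearMap.smul_apply, smul_eq_mul]
  ring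

lemma wd_const_mul (e a : ℂ) (f : ℂ → ℂ) (x : ℂ) (hf : DifferentiableAt ℝ f x) :
    wd e (fun y => a * f y) x = a * wd e f x := by
  simp only [wd, fderiv_const_mul hf a, ContinuousLinearMap.smul_apply, smul_eq_mul]
  ring

lemma wd_sum (e : ℂ) {ι : Type*} (s : Finset ι) (f : ι → ℂ → ℂ) (x : ℂ)
    (hf : ∀ i ∈ s, DifferentiableAt ℝ (f i) x) :
    wd e (fun y => ∑ i ∈ s, f i y) x = ∑ i ∈ s, wd e (f i) x := by
  simp only [wd, fderiv_fun_sum hf, ContinuousLinearMap.coe_sum', Finset.sum_apply,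
    smul_eq_mul]
  rw [Finset.mul_sum, ← Finset.sum_add_distrib, Finset.mul_sum]

lemma wd_contDiff (e : ℂ) {f : ℂ → F} (hf : ContDiff ℝ (⊤ : ℕ∞) f) : ContDiff ℝ (⊤ : ℕ∞) (wd e f) := by
  have h1 : ContDiff ℝ (⊤ : ℕ∞) (fderiv ℝ f) := hf.fderiv_right (by simp)
  exact (((h1.clm_apply contDiff_const).add
    ((h1.clm_apply contDiff_const).const_smul e)).const_smul ((2:ℂ)⁻¹))

lemma wd_comm (e e' : ℂ) {f : ℂ → F} (hf : ContDiff ℝ (⊤ : ℕ∞) f) (x : ℂ) :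
    wd e (wd e' f) x = wd e' (wd e f) x := by
  have hdf : ContDiff ℝ (⊤ : ℕ∞) (fderiv ℝ f) := hf.fderiv_right (by simp)
  have hD2 : HasFDerivAt (fderiv ℝ f) (fderiv ℝ (fderiv ℝ f) x) x :=
    (hdf.differentiable (by simp) x).hasFDerivAt
  set D2 := fderiv ℝ (fderiv ℝ f) x with hD2def
  have key : ∀ v w : ℂ, fderiv ℝ (fun y => fderiv ℝ f y v) x w = D2 w v := by
    intro v w
    have h := ((ContinuousLinearMap.apply ℝ F v).hasFDerivAt.comp x hD2).fderiv
    have h2 : (fun y => fderiv ℝ f y v)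
        = (ContinuousLinearMap.apply ℝ F v) ∘ (fderiv ℝ f) := rfl
    rw [h2, h]
    rfl
  have hdv : ∀ v : ℂ, DifferentiableAt ℝ (fun y => fderiv ℝ f y v) x := by
    intro v
    exact ((hdf.clm_apply contDiff_const).differentiable (by simp) x)
  have hw : ∀ e'' w : ℂ, fderiv ℝ (wd e'' f) x w = (2:ℂ)⁻¹ • (D2 w 1 + e'' • D2 w Complex.I) := by
    intro e'' w
    have h2 : wd e'' f = fun y => (2:ℂ)⁻¹ • ((fun y => fderiv ℝ f y 1) y
        + e'' • (fun y => fderiv ℝ f y Complex.I) y) := rfl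
    rw [h2, fderiv_fun_const_smul (((hdv 1).fun_add ((hdv Complex.I).fun_const_smul e''))) ((2:ℂ)⁻¹),
      fderiv_fun_add (hdv 1) ((hdv Complex.I).fun_const_smul e''),
      fderiv_fun_const_smul (hdv Complex.I) e'']
    simp only [ContinuousLinearMap.smul_apply, ContinuousLinearMap.add_apply, key]
  have hsymm : D2 1 Complex.I = D2 Complex.I 1 :=
    second_derivative_symmetric (fun y => (hf.differentiable (by simp) y).hasFDerivAt) hD2 1 Complex.I
  show (2:ℂ)⁻¹ • (fderiv ℝ (wd e' f) x 1 + e • fderiv ℝ (wd e' f) x Complex.I)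
      = (2:ℂ)⁻¹ • (fderiv ℝ (wd e f) x 1 + e' • fderiv ℝ (wd e f) x Complex.I)
  rw [hw, hw, hw, hw, hsymm]
  module

lemma fderiv_real_of_real {f : ℂ → ℂ} {x : ℂ} (hreal : ∀ y, (f y).im = 0)
    (hf : DifferentiableAt ℝ f x) (v : ℂ) :
    (starRingEnd ℂ) (fderiv ℝ f x v) = fderiv ℝ f x v := by
  have hconj : (fun y => (starRingEnd ℂ) (f y)) = f := by
    funext y; exact Complex.conj_eq_iff_im.2 (hreal y)
  have h := ((Complex.conjCLE.toContinuousLinearMap).hasFDerivAt.comp x hf.hasFDerivAt).fderiv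
  have h2 : (fun y => (starRingEnd ℂ) (f y)) = (Complex.conjCLE.toContinuousLinearMap) ∘ f := rfl
  rw [hconj] at h2
  calc (starRingEnd ℂ) (fderiv ℝ f x v)
      = ((Complex.conjCLE.toContinuousLinearMap).comp (fderiv ℝ f x)) v := rfl
    _ = fderiv ℝ f x v := by rw [← h, ← h2]

lemma conj_wd {f : ℂ → ℂ} {x : ℂ} (hreal : ∀ y, (f y).im = 0)
    (hf : DifferentiableAt ℝ f x) (e : ℂ) :
    (starRingEnd ℂ) (wd e f x) = wd ((starRingEnd ℂ) e) f x := by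
  simp only [wd, smul_eq_mul, map_mul, map_add, map_inv₀, fderiv_real_of_real hreal hf, map_ofNat]

lemma wd_proj {m : ℕ} (e : ℂ) {f : ℂ → EuclideanSpace ℂ (Fin m)} {x : ℂ}
    (hf : DifferentiableAt ℝ f x) (i : Fin m) :
    wd e f x i = wd e (fun y => f y i) x := by
  have hd : fderiv ℝ (fun y => f y i) x
      = (((EuclideanSpace.proj i : EuclideanSpace ℂ (Fin m) →L[ℂ] ℂ).restrictScalars ℝ).comp
        (fderiv ℝ f x)) :=
    ((((EuclideanSpace.proj i : EuclideanSpace ℂ (Fin m) →L[ℂ] ℂ).restrictScalars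
        ℝ)).hasFDerivAt.comp x hf.hasFDerivAt).fderiv
  simp only [wd, hd, ContinuousLinearMap.comp_apply, ContinuousLinearMap.coe_restrictScalars',
    PiLp.smul_apply, PiLp.add_apply, smul_eq_mul]
  rfl

/-- the vanishing of the ψ-component of `p_{i,z} + η_{∂/∂z} p_{i−1}` is a
differential consequence of the other four structure equations: with
`βᵢ = −2γᵢ,z̄`, `αᵢ = 2γᵢ,zz̄ + 2(κ,κ)γᵢ`, `D_z qᵢ = 2γᵢ,z̄κ − 2γᵢ D_z̄κ`,
`γᵢ₋₁ = 2γᵢ,zz + cγᵢ + 2(qᵢ,κ)` and the conformal Gauss equation `c_z̄ = 4(κ,κ)_z`,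
one has `αᵢ,z − (c/2)βᵢ − β̄ᵢ(κ,κ) + 2(qᵢ,κ_z̄) + βᵢ₋₁/2 = 0`. -/
theorem psi_component_vanishes {m : ℕ}
    (κ q : ℂ → EuclideanSpace ℂ (Fin m)) (c γ : ℂ → ℂ)
    (hκs : ContDiff ℝ (⊤ : ℕ∞) κ) (hqs : ContDiff ℝ (⊤ : ℕ∞) q)
    (hcs : ContDiff ℝ (⊤ : ℕ∞) c) (hγs : ContDiff ℝ (⊤ : ℕ∞) γ)
    (hκreal : ∀ x i, (κ x i).im = 0)
    (hqreal : ∀ x i, (q x i).im = 0)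
    (hγreal : ∀ x, (γ x).im = 0)
    (hGauss : ∀ x, wzb c x = 4 * wz (fun y => ∑ i, κ y i * κ y i) x)
    (hqeq : ∀ x, wz q x = (2 * wzb γ x) • κ x - (2 * γ x) • wzb κ x) :
    ∀ x,
      wz (fun y => 2 * wz (wzb γ) y + 2 * (∑ i, κ y i * κ y i) * γ y) x
        - (c x / 2) * (-2 * wzb γ x)
        - (starRingEnd ℂ) (-2 * wzb γ x) * (∑ i, κ x i * κ x i)
        + 2 * (∑ i, q x i * wzb κ x i)
        + (-2 * wzb (fun y =>
            2 * wz (wz γ) y + c y * γ y + 2 * ∑ i, q y i * κ y i) x) / 2 = 0 := by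
  intro x
  simp only [wz_eq_wd, wzb_eq_wd] at hGauss hqeq ⊢
  -- component smoothness
  have hκi : ∀ i : Fin m, ContDiff ℝ (⊤ : ℕ∞) (fun y => κ y i) := fun i =>
    (((EuclideanSpace.proj i : EuclideanSpace ℂ (Fin m) →L[ℂ] ℂ).restrictScalars
      ℝ).contDiff).comp hκs
  have hqi : ∀ i : Fin m, ContDiff ℝ (⊤ : ℕ∞) (fun y => q y i) := fun i =>
    (((EuclideanSpace.proj i : EuclideanSpace ℂ (Fin m) →L[ℂ] ℂ).restrictScalars
      ℝ).contDiff).comp hqs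
  have hKs : ContDiff ℝ (⊤ : ℕ∞) (fun y => ∑ i, κ y i * κ y i) :=
    ContDiff.sum fun i _ => (hκi i).mul (hκi i)
  have hqκs : ContDiff ℝ (⊤ : ℕ∞) (fun y => ∑ i, q y i * κ y i) :=
    ContDiff.sum fun i _ => (hqi i).mul (hκi i)
  -- differentiability at x
  have dγ : DifferentiableAt ℝ γ x := (hγs.differentiable (by simp)) x
  have dc : DifferentiableAt ℝ c x := (hcs.differentiable (by simp)) x
  have dκ : DifferentiableAt ℝ κ x := (hκs.differentiable (by simp)) x
  have dq : DifferentiableAt ℝ q x := (hqs.differentiable (by simp)) x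
  have dκi : ∀ i, DifferentiableAt ℝ (fun y => κ y i) x := fun i =>
    ((hκi i).differentiable (by simp)) x
  have dqi : ∀ i, DifferentiableAt ℝ (fun y => q y i) x := fun i =>
    ((hqi i).differentiable (by simp)) x
  -- projection of hqeq
  have hq_i : ∀ i, wd (-Complex.I) (fun y => q y i) x
      = 2 * wd Complex.I γ x * κ x i - 2 * γ x * wd Complex.I (fun y => κ y i) x := by
    intro i
    have h := congrArg (fun v : EuclideanSpace ℂ (Fin m) => v i) (hqeq x)
    simp only [PiLp.sub_apply, PiLp.smul_apply, smul_eq_mul] at h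
    rw [wd_proj (-Complex.I) dq i, wd_proj Complex.I dκ i] at h
    exact h
  have hqb_i : ∀ i, wd Complex.I (fun y => q y i) x
      = 2 * wd (-Complex.I) γ x * κ x i - 2 * γ x * wd (-Complex.I) (fun y => κ y i) x := by
    intro i
    have hc := conj_wd (f := fun y => q y i) (fun y => hqreal y i) (dqi i) (-Complex.I)
    rw [Complex.conj_neg_I] at hc
    rw [← hc, hq_i i, map_sub, map_mul, map_mul, map_mul, map_mul,
      conj_wd hγreal dγ Complex.I, Complex.conj_I,
      Complex.conj_eq_iff_im.2 (hκreal x i), Complex.conj_eq_iff_im.2 (hγreal x),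
      conj_wd (fun y => hκreal y i) (dκi i) Complex.I, Complex.conj_I, map_ofNat]
  -- expand first big term
  have hA : wd (-Complex.I) (fun y => 2 * wd (-Complex.I) (wd Complex.I γ) y
        + 2 * (∑ i, κ y i * κ y i) * γ y) x
      = 2 * wd (-Complex.I) (wd (-Complex.I) (wd Complex.I γ)) x
        + (2 * wd (-Complex.I) (fun y => ∑ i, κ y i * κ y i) x * γ x
          + 2 * (∑ i, κ x i * κ x i) * wd (-Complex.I) γ x) := by
    rw [wd_add (-Complex.I) (fun y => 2 * wd (-Complex.I) (wd Complex.I γ) y)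
        (fun y => 2 * (∑ i, κ y i * κ y i) * γ y) x
        ((contDiff_const.mul (wd_contDiff _ (wd_contDiff _ hγs))).differentiable (by simp) x)
        (((contDiff_const.mul hKs).mul hγs).differentiable (by simp) x),
      wd_const_mul (-Complex.I) 2 (wd (-Complex.I) (wd Complex.I γ)) x
        ((wd_contDiff _ (wd_contDiff _ hγs)).differentiable (by simp) x),
      wd_mul (-Complex.I) (fun y => 2 * (∑ i, κ y i * κ y i)) γ x
        ((contDiff_const.mul hKs).differentiable (by simp) x) dγ,
      wd_const_mul (-Complex.I) 2 (fun y => ∑ i, κ y i * κ y i) x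
        (hKs.differentiable (by simp) x)]
  -- expand last big term
  have hB : wd Complex.I (fun y => 2 * wd (-Complex.I) (wd (-Complex.I) γ) y
        + c y * γ y + 2 * ∑ i, q y i * κ y i) x
      = 2 * wd Complex.I (wd (-Complex.I) (wd (-Complex.I) γ)) x
        + (wd Complex.I c x * γ x + c x * wd Complex.I γ x)
        + 2 * wd Complex.I (fun y => ∑ i, q y i * κ y i) x := by
    rw [wd_add Complex.I (fun y => 2 * wd (-Complex.I) (wd (-Complex.I) γ) y + c y * γ y)
        (fun y => 2 * ∑ i, q y i * κ y i) x
        (((contDiff_const.mul (wd_contDiff _ (wd_contDiff _ hγs))).add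
          (hcs.mul hγs)).differentiable (by simp) x)
        ((contDiff_const.mul hqκs).differentiable (by simp) x),
      wd_add Complex.I (fun y => 2 * wd (-Complex.I) (wd (-Complex.I) γ) y)
        (fun y => c y * γ y) x
        ((contDiff_const.mul (wd_contDiff _ (wd_contDiff _ hγs))).differentiable (by simp) x)
        ((hcs.mul hγs).differentiable (by simp) x),
      wd_const_mul Complex.I 2 (wd (-Complex.I) (wd (-Complex.I) γ)) x
        ((wd_contDiff _ (wd_contDiff _ hγs)).differentiable (by simp) x),
      wd_mul Complex.I c γ x dc dγ,
      wd_const_mul Complex.I 2 (fun y => ∑ i, q y i * κ y i) x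
        (hqκs.differentiable (by simp) x)]
  -- sums
  have hKz : wd (-Complex.I) (fun y => ∑ i, κ y i * κ y i) x
      = 2 * ∑ i, wd (-Complex.I) (fun y => κ y i) x * κ x i := by
    rw [wd_sum (-Complex.I) Finset.univ (fun i y => κ y i * κ y i) x
        (fun i _ => ((hκi i).mul (hκi i)).differentiable (by simp) x), Finset.mul_sum]
    refine Finset.sum_congr rfl fun i _ => ?_
    rw [wd_mul (-Complex.I) (fun y => κ y i) (fun y => κ y i) x (dκi i) (dκi i)]
    ring
  have hqκ : wd Complex.I (fun y => ∑ i, q y i * κ y i) x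
      = 2 * wd (-Complex.I) γ x * (∑ i, κ x i * κ x i)
        - 2 * γ x * (∑ i, wd (-Complex.I) (fun y => κ y i) x * κ x i)
        + ∑ i, q x i * wd Complex.I (fun y => κ y i) x := by
    rw [wd_sum Complex.I Finset.univ (fun i y => q y i * κ y i) x
        (fun i _ => ((hqi i).mul (hκi i)).differentiable (by simp) x),
      Finset.mul_sum, Finset.mul_sum, ← Finset.sum_sub_distrib, ← Finset.sum_add_distrib]
    refine Finset.sum_congr rfl fun i _ => ?_
    rw [wd_mul Complex.I (fun y => q y i) (fun y => κ y i) x (dqi i) (dκi i), hqb_i i]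
    ring
  have hD : (∑ i, q x i * wd Complex.I κ x i)
      = ∑ i, q x i * wd Complex.I (fun y => κ y i) x :=
    Finset.sum_congr rfl fun i _ => by rw [wd_proj Complex.I dκ i]
  have hconj : (starRingEnd ℂ) (-2 * wd Complex.I γ x) = -2 * wd (-Complex.I) γ x := by
    rw [map_mul, map_neg, map_ofNat, conj_wd hγreal dγ Complex.I, Complex.conj_I]
  have hcomm : wd (-Complex.I) (wd (-Complex.I) (wd Complex.I γ)) x
      = wd Complex.I (wd (-Complex.I) (wd (-Complex.I) γ)) x := by
    have h1 : wd (-Complex.I) (wd Complex.I γ) = wd Complex.I (wd (-Complex.I) γ) :=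
      funext fun y => wd_comm _ _ hγs y
    rw [h1]
    exact wd_comm _ _ (wd_contDiff _ hγs) x
  rw [hA, hD, hconj, hB, hGauss x, hKz, hqκ, hcomm]
  ring
end
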